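/- Let R be an irreducible finite crystallographic root system with Weyl group W, and let R̃ ⊆ R \ {0} be a W-invariant subset such that the reflections associated to roots in R̃ generate W. Then R̃ is a union of W-orbits of roots, and either R̃ equals the set of all nonzero roots, or R is non-reduced (of type BC_ℓ) and R̃ equals the nonzero roots minus either the short roots or the extra-long (divisible) roots. -/

import Mathlib

open scoped RealInnerProductSpace

noncomputable def reflFun {V : Type*} [NormedAddCommGroup V] [InnerProductSpace ℝ V]
    (α : V) : V → V :=
  fun v => v - (2 * ⟪v, α⟫ / ⟪α, α⟫) • α

lemma reflFun_involutive {V : Type*} [NormedAddCommGroup V] [InnerProductSpace ℝ V]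
    (α : V) (hα : α ≠ 0) : Function.Involutive (reflFun α) := by
  intro v
  have hc : ⟪α, α⟫ ≠ 0 := (inner_self_ne_zero (𝕜 := ℝ)).mpr hα
  simp only [reflFun, inner_sub_left, real_inner_smul_left]
  rw [sub_eq_iff_eq_add]
  field_simp
  module

noncomputable def reflPerm {V : Type*} [NormedAddCommGroup V] [InnerProductSpace ℝ V]
    (α : V) (hα : α ≠ 0) : Equiv.Perm V :=
  Function.Involutive.toPerm _ (reflFun_involutive α hα)

section A
variable {V : Type*} [NormedAddCommGroup V] [InnerProductSpace ℝ V]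

lemma reflFun_add (α u v : V) : reflFun α (u + v) = reflFun α u + reflFun α v := by
  simp only [reflFun, inner_add_left]
  module

lemma reflFun_smulv (α : V) (c : ℝ) (v : V) : reflFun α (c • v) = c • reflFun α v := by
  simp only [reflFun, real_inner_smul_left]
  module

lemma reflFun_sub (α u v : V) : reflFun α (u - v) = reflFun α u - reflFun α v := by
  simp only [reflFun, inner_sub_left]
  module

lemma reflFun_neg (α v : V) : reflFun α (-v) = -reflFun α v := by
  simp only [reflFun, inner_neg_left]
  module

lemma reflFun_zero (α : V) : reflFun α 0 = 0 := by simp [reflFun]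

lemma reflFun_self (α : V) (hα : α ≠ 0) : reflFun α α = -α := by
  have hc : ⟪α, α⟫ ≠ 0 := (inner_self_ne_zero (𝕜 := ℝ)).mpr hα
  simp only [reflFun]
  rw [show 2 * ⟪α, α⟫ / ⟪α, α⟫ = 2 by field_simp]
  module

lemma reflFun_fixed (α v : V) (h : ⟪v, α⟫ = 0) : reflFun α v = v := by
  simp [reflFun, h]

lemma inner_reflFun_left (α u v : V) : ⟪reflFun α u, v⟫ = ⟪u, reflFun α v⟫ := by
  simp only [reflFun, inner_sub_left, inner_sub_right, real_inner_smul_left,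
    real_inner_smul_right]
  rw [real_inner_comm v α]
  ring

lemma inner_reflFun_reflFun (α : V) (hα : α ≠ 0) (u v : V) :
    ⟪reflFun α u, reflFun α v⟫ = ⟪u, v⟫ := by
  have hc : ⟪α, α⟫ ≠ 0 := (inner_self_ne_zero (𝕜 := ℝ)).mpr hα
  simp only [reflFun, inner_sub_left, inner_sub_right, real_inner_smul_left,
    real_inner_smul_right]
  rw [real_inner_comm v α]
  field_simp
  ring

lemma reflFun_ne_zero (α : V) (hα : α ≠ 0) {v : V} (hv : v ≠ 0) : reflFun α v ≠ 0 := by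
  intro h
  have h2 := reflFun_involutive α hα v
  rw [h, reflFun_zero] at h2
  exact hv h2.symm

lemma reflFun_smul_root (α : V) (c : ℝ) (hc : c ≠ 0) : reflFun (c • α) = reflFun α := by
  by_cases hα : α = 0
  · subst hα; simp [reflFun]
  · have hC : ⟪α, α⟫ ≠ 0 := (inner_self_ne_zero (𝕜 := ℝ)).mpr hα
    funext v
    simp only [reflFun, real_inner_smul_right, real_inner_smul_left, smul_smul]
    match_scalars
    · ring
    · field_simp

noncomputable def sperm {V : Type*} [NormedAddCommGroup V] [InnerProductSpace ℝ V]
    (α : V) : Equiv.Perm V := @dite _ (α = 0) (Classical.dec _) (fun _ => 1) (fun h => reflPerm α h)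

lemma reflPerm_apply (α : V) (h : α ≠ 0) (v : V) : reflPerm α h v = reflFun α v := rfl

lemma sperm_eq {α : V} (h : α ≠ 0) : sperm α = reflPerm α h := by rw [sperm, dif_neg h]

lemma sperm_apply {α : V} (h : α ≠ 0) (v : V) : sperm α v = reflFun α v := by
  rw [sperm_eq h]; rfl

lemma sperm_zero : sperm (0 : V) = 1 := by rw [sperm, dif_pos rfl]

lemma sperm_sperm (α v : V) : sperm α (sperm α v) = v := by
  by_cases h : α = 0
  · subst h; simp [sperm_zero]
  · rw [sperm_apply h, sperm_apply h]; exact reflFun_involutive α h v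

lemma sperm_mul_self (α : V) : sperm α * sperm α = 1 := by
  ext v; exact sperm_sperm α v

lemma sperm_inv (α : V) : (sperm α)⁻¹ = sperm α :=
  inv_eq_of_mul_eq_one_right (sperm_mul_self α)

lemma sperm_smul {c : ℝ} (hc : c ≠ 0) (α : V) : sperm (c • α) = sperm α := by
  by_cases hα : α = 0
  · subst hα; rw [smul_zero]
  · have h2 : c • α ≠ 0 := smul_ne_zero hc hα
    ext v
    rw [sperm_apply h2, sperm_apply hα, reflFun_smul_root α c hc]

lemma sperm_neg (α : V) : sperm (-α) = sperm α := by
  rw [show -α = (-1 : ℝ) • α by module]; exact sperm_smul (by norm_num) α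

lemma refl_conj_point (a γ v : V) (ha : a ≠ 0) :
    reflFun a (reflFun γ (reflFun a v)) = reflFun (reflFun a γ) v := by
  by_cases hγ : γ = 0
  · subst hγ; simp [reflFun_zero, reflFun]
    simpa [reflFun] using reflFun_involutive a ha v
  · have h1 : reflFun γ (reflFun a v)
        = reflFun a v - (2 * ⟪reflFun a v, γ⟫ / ⟪γ, γ⟫) • γ := rfl
    rw [h1, reflFun_sub, reflFun_smulv, reflFun_involutive a ha v]
    have e1 : ⟪reflFun a v, γ⟫ = ⟪v, reflFun a γ⟫ := inner_reflFun_left a v γ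
    have e2 : ⟪γ, γ⟫ = ⟪reflFun a γ, reflFun a γ⟫ := (inner_reflFun_reflFun a ha γ γ).symm
    rw [e1, e2]
    rfl

lemma sperm_conj (a γ : V) (ha : a ≠ 0) :
    sperm (reflFun a γ) = sperm a * sperm γ * sperm a := by
  by_cases hγ : γ = 0
  · subst hγ; rw [reflFun_zero, sperm_zero, mul_one, sperm_mul_self]
  · ext v
    have hag : reflFun a γ ≠ 0 := reflFun_ne_zero a ha hγ
    show sperm (reflFun a γ) v = sperm a (sperm γ (sperm a v))
    rw [sperm_apply hag, sperm_apply ha, sperm_apply hγ, sperm_apply ha,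
      refl_conj_point a γ v ha]

end A
section B
variable {V : Type*} [NormedAddCommGroup V] [InnerProductSpace ℝ V]

/-- If no element of the finite set `T` is proportional to `α ≠ 0`, there is a vector
orthogonal to `α` but to no element of `T`. -/
lemma exists_generic [FiniteDimensional ℝ V] (α : V) (hα : α ≠ 0) (T : Set V) (hT : T.Finite)
    (hprop : ∀ β ∈ T, ¬ ∃ c : ℝ, β = c • α) :
    ∃ x : V, ⟪x, α⟫ = 0 ∧ ∀ β ∈ T, ⟪x, β⟫ ≠ 0 := by
  classical
  by_contra hcon
  push_neg at hcon
  set K : Submodule ℝ V := (Submodule.span ℝ {α})ᗮ with hK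
  set p : hT.toFinset → Subspace ℝ K := fun β =>
    Submodule.comap K.subtype (LinearMap.ker ((innerSL ℝ (β : V)).toLinearMap)) with hp
  have hcover : ⋃ i, ((p i : Subspace ℝ K) : Set K) = Set.univ := by
    ext x
    simp only [Set.mem_iUnion, Set.mem_univ, iff_true]
    have hxα : ⟪(x : V), α⟫ = 0 := by
      have h2 := (Submodule.mem_orthogonal _ _).1 x.2 α (Submodule.mem_span_singleton_self α)
      rw [real_inner_comm]
      exact h2
    obtain ⟨β, hβT, hβ0⟩ := hcon (x : V) hxα
    refine ⟨⟨β, hT.mem_toFinset.2 hβT⟩, ?_⟩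
    simp only [hp, SetLike.mem_coe, Submodule.mem_comap, LinearMap.mem_ker,
      ContinuousLinearMap.coe_coe, Submodule.coe_subtype, innerSL_apply_apply]
    rw [real_inner_comm]
    exact hβ0
  obtain ⟨i, hi⟩ := Subspace.exists_eq_top_of_iUnion_eq_univ hcover
  have hiK : (i : V) ∈ Kᗮ := by
    rw [Submodule.mem_orthogonal]
    intro u hu
    have : (⟨u, hu⟩ : K) ∈ p i := by rw [hi]; trivial
    simp only [hp, Submodule.mem_comap, LinearMap.mem_ker, ContinuousLinearMap.coe_coe,
      Submodule.coe_subtype, innerSL_apply_apply] at this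
    rw [real_inner_comm]
    exact this
  rw [hK, Submodule.orthogonal_orthogonal, Submodule.mem_span_singleton] at hiK
  obtain ⟨c, hc⟩ := hiK
  exact hprop (i : V) (hT.mem_toFinset.1 i.2) ⟨c, hc.symm⟩

/-- Every element of the group generated by root reflections is a linear isometry
preserving `R`. -/
lemma closure_good (R : Set V)
    (hrefl : ∀ α ∈ R, ∀ β ∈ R, reflFun α β ∈ R) (g : Equiv.Perm V)
    (hg : g ∈ Subgroup.closure
      {p : Equiv.Perm V | ∃ γ ∈ R, ∃ h : γ ≠ 0, p = reflPerm γ h}) :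
    (∀ u v : V, ⟪g u, g v⟫ = ⟪u, v⟫) ∧ (∀ u v : V, g (u + v) = g u + g v) ∧
    (∀ (c : ℝ) (u : V), g (c • u) = c • g u) ∧ (∀ γ ∈ R, g γ ∈ R) ∧ (∀ γ ∈ R, g⁻¹ γ ∈ R) := by
  induction hg using Subgroup.closure_induction with
  | mem x hx =>
    obtain ⟨γ, hγR, hγ0, rfl⟩ := hx
    have hinv : (reflPerm γ hγ0)⁻¹ = reflPerm γ hγ0 := by
      rw [← sperm_eq hγ0, sperm_inv]
    refine ⟨fun u v => inner_reflFun_reflFun γ hγ0 u v, fun u v => reflFun_add γ u v,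
      fun c u => reflFun_smulv γ c u, fun β hβ => hrefl γ hγR β hβ, ?_⟩
    rw [hinv]
    exact fun β hβ => hrefl γ hγR β hβ
  | one => simp
  | mul x y hx hy ihx ihy =>
    obtain ⟨xi, xa, xs, xR, xR'⟩ := ihx
    obtain ⟨yi, ya, ys, yR, yR'⟩ := ihy
    refine ⟨fun u v => by simp only [Equiv.Perm.mul_apply]; rw [xi, yi],
      fun u v => by simp only [Equiv.Perm.mul_apply]; rw [ya, xa],
      fun c u => by simp only [Equiv.Perm.mul_apply]; rw [ys, xs],
      fun γ hγ => by simpa using xR _ (yR _ hγ),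
      fun γ hγ => by
        rw [mul_inv_rev]
        simpa using yR' _ (xR' _ hγ)⟩
  | inv x hx ihx =>
    obtain ⟨xi, xa, xs, xR, xR'⟩ := ihx
    refine ⟨fun u v => ?_, fun u v => ?_, fun c u => ?_, by simpa using xR', by simpa using xR⟩
    · rw [← xi (x⁻¹ u) (x⁻¹ v)]
      simp
    · apply x.injective
      rw [xa]
      simp
    · apply x.injective
      rw [xs]
      simp

lemma vec_list_of_perm_list {S : Set V} (l : List (Equiv.Perm V))
    (hl : ∀ y ∈ l, y ∈ {p : Equiv.Perm V | ∃ γ ∈ S, ∃ h : γ ≠ 0, p = reflPerm γ h}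
      ∪ {p : Equiv.Perm V | ∃ γ ∈ S, ∃ h : γ ≠ 0, p = reflPerm γ h}⁻¹) :
    ∃ lv : List V, (∀ a ∈ lv, a ∈ S) ∧ (lv.map sperm).prod = l.prod := by
  induction l with
  | nil => exact ⟨[], by simp, by simp⟩
  | cons p t ih =>
    have hp := hl p List.mem_cons_self
    have hmem : ∃ γ ∈ S, p = sperm γ := by
      rcases hp with h | h
      · obtain ⟨γ, hγ, hγ0, hpe⟩ := h
        exact ⟨γ, hγ, by rw [hpe, sperm_eq hγ0]⟩
      · obtain ⟨γ, hγ, hγ0, hpe⟩ := Set.mem_inv.1 h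
        rw [← sperm_eq hγ0] at hpe
        exact ⟨γ, hγ, by rw [← inv_inv p, hpe, sperm_inv]⟩
    obtain ⟨γ, hγS, rfl⟩ := hmem
    obtain ⟨t', ht', htp⟩ := ih (fun y hy => hl y (List.mem_cons_of_mem _ hy))
    refine ⟨γ :: t', ?_, ?_⟩
    · intro a ha
      rcases List.mem_cons.1 ha with rfl | ha
      · exact hγS
      · exact ht' a ha
    · simp only [List.map_cons, List.prod_cons, htp]

lemma exists_vec_list {S : Set V} (g : Equiv.Perm V)
    (hg : g ∈ Subgroup.closure {p : Equiv.Perm V | ∃ γ ∈ S, ∃ h : γ ≠ 0, p = reflPerm γ h}) :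
    ∃ l : List V, (∀ a ∈ l, a ∈ S) ∧ (l.map sperm).prod = g := by
  have hg' : g ∈ Submonoid.closure ({p : Equiv.Perm V | ∃ γ ∈ S, ∃ h : γ ≠ 0, p = reflPerm γ h}
      ∪ {p : Equiv.Perm V | ∃ γ ∈ S, ∃ h : γ ≠ 0, p = reflPerm γ h}⁻¹) := by
    rw [← Subgroup.closure_toSubmonoid]
    exact hg
  obtain ⟨l, hl, hlp⟩ := Submonoid.exists_list_of_mem_closure hg'
  obtain ⟨lv, hlv, hlvp⟩ := vec_list_of_perm_list l hl
  exact ⟨lv, hlv, by rw [hlvp, hlp]⟩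

end B
section C
variable {V : Type*} [NormedAddCommGroup V] [InnerProductSpace ℝ V]

/-- Positive roots with respect to a generic functional `⟪x, ·⟫`. -/
def Pos (Rt : Set V) (x : V) : Set V := {β | β ∈ Rt ∧ 0 < ⟪x, β⟫}

/-- Indecomposable positive roots. -/
def Simp (Rt : Set V) (x : V) : Set V :=
  {β | β ∈ Pos Rt x ∧ ¬ ∃ γ ∈ Pos Rt x, ∃ δ ∈ Pos Rt x, β = γ + δ}

/-- Context: `Rt` is a finite set of nonzero vectors, closed under negation and
under its own reflections, crystallographic, and `x` is a generic vector. -/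
structure RtCtx (Rt : Set V) (x : V) : Prop where
  fin : Rt.Finite
  nz : ∀ β ∈ Rt, β ≠ (0 : V)
  neg : ∀ β ∈ Rt, -β ∈ Rt
  clos : ∀ β ∈ Rt, ∀ γ ∈ Rt, reflFun β γ ∈ Rt
  crys : ∀ α ∈ Rt, ∀ β ∈ Rt, ∃ m : ℤ, 2 * ⟪β, α⟫ / ⟪α, α⟫ = (m : ℝ)
  gen : ∀ β ∈ Rt, ⟪x, β⟫ ≠ 0

variable {Rt : Set V} {x : V}

lemma pos_sub : Pos Rt x ⊆ Rt := fun _ h => h.1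

lemma rinner_pos {β : V} (h : β ≠ 0) : (0:ℝ) < ⟪β, β⟫ :=
  lt_of_le_of_ne real_inner_self_nonneg (Ne.symm ((inner_self_ne_zero (𝕜 := ℝ)).2 h))

lemma simp_sub_pos : Simp Rt x ⊆ Pos Rt x := fun _ h => h.1

lemma mem_pos_or_neg (ctx : RtCtx Rt x) {β : V} (hβ : β ∈ Rt) :
    β ∈ Pos Rt x ∨ -β ∈ Pos Rt x := by
  rcases lt_or_gt_of_ne (ctx.gen β hβ) with h | h
  · right
    exact ⟨ctx.neg β hβ, by rw [inner_neg_right]; linarith⟩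
  · left
    exact ⟨hβ, h⟩

lemma not_pos_and_neg {β : V} (h1 : β ∈ Pos Rt x) (h2 : -β ∈ Pos Rt x) : False := by
  have := h1.2
  have h3 := h2.2
  rw [inner_neg_right] at h3
  linarith

/-- Classification of the ratio between two proportional "roots" with integral
Cartan numbers. -/
lemma ratio_class {α β : V} (hβ : β ≠ 0) {c : ℝ} (hc : c ≠ 0) (hαβ : α = c • β)
    (h1 : ∃ m : ℤ, 2 * ⟪α, β⟫ / ⟪β, β⟫ = (m : ℝ))
    (h2 : ∃ m : ℤ, 2 * ⟪β, α⟫ / ⟪α, α⟫ = (m : ℝ)) :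
    c = 1 ∨ c = -1 ∨ c = 2 ∨ c = -2 ∨ c = 1/2 ∨ c = -1/2 := by
  have hB : (0:ℝ) < ⟪β, β⟫ := rinner_pos hβ
  have hBne : ⟪β, β⟫ ≠ 0 := ne_of_gt hB
  obtain ⟨m, hm⟩ := h1
  obtain ⟨n, hn⟩ := h2
  rw [hαβ] at hm hn
  rw [real_inner_smul_left] at hm
  rw [real_inner_smul_right, real_inner_smul_left, real_inner_smul_right] at hn
  have hm2 : 2 * c = (m : ℝ) := by
    rw [← hm]
    field_simp
  have hn2 : 2 / c = (n : ℝ) := by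
    rw [← hn]
    field_simp
  have hmn : m * n = 4 := by
    have h4 : ((m : ℝ)) * n = 4 := by
      rw [← hm2, ← hn2]
      field_simp
      ring
    exact_mod_cast h4
  have hm0 : m ≠ 0 := by
    intro h
    rw [h] at hm2
    simp at hm2
    exact hc (by linarith)
  have hd : m ∣ 4 := ⟨n, hmn.symm⟩
  have hub := Int.le_of_dvd (by norm_num) hd
  have hlb : -4 ≤ m := by
    have := Int.le_of_dvd (by norm_num : (0:ℤ) < 4) ((neg_dvd).2 hd)
    linarith
  interval_cases m
  · push_cast at hm2; right; right; right; left; linarith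
  · exfalso; omega
  · push_cast at hm2; right; left; linarith
  · push_cast at hm2; right; right; right; right; right; linarith
  · exact absurd rfl hm0
  · push_cast at hm2; right; right; right; right; left; linarith
  · push_cast at hm2; left; linarith
  · exfalso; omega
  · push_cast at hm2; right; right; left; linarith

/-- Strict Cauchy–Schwarz for non-proportional vectors. -/
lemma strict_cs {α β : V} (hα : α ≠ 0) (hnp : ¬ ∃ c : ℝ, β = c • α) :
    ⟪α, β⟫ * ⟪α, β⟫ < ⟪α, α⟫ * ⟪β, β⟫ := by
  have hle : |⟪α, β⟫| ≤ ‖α‖ * ‖β‖ := abs_real_inner_le_norm α β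
  have hna : ‖α‖ ≠ 0 := norm_ne_zero_iff.2 hα
  have hne : |⟪α, β⟫| ≠ ‖α‖ * ‖β‖ := by
    intro h
    rcases (abs_eq (by positivity : (0:ℝ) ≤ ‖α‖ * ‖β‖)).1 h with h1 | h1
    · have h3 := inner_eq_norm_mul_iff_real.1 h1
      apply hnp
      refine ⟨‖β‖ / ‖α‖, ?_⟩
      have h5 := congrArg (fun v : V => (‖α‖)⁻¹ • v) h3
      simp only [smul_smul] at h5
      rw [inv_mul_cancel₀ hna, one_smul] at h5
      rw [div_eq_inv_mul]
      exact h5.symm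
    · have h2 : ⟪α, -β⟫ = ‖α‖ * ‖-β‖ := by
        rw [inner_neg_right, norm_neg, h1]; ring
      have h3 := inner_eq_norm_mul_iff_real.1 h2
      apply hnp
      refine ⟨-(‖β‖ / ‖α‖), ?_⟩
      have h5 := congrArg (fun v : V => (‖α‖)⁻¹ • v) h3
      simp only [smul_smul, norm_neg] at h5
      rw [inv_mul_cancel₀ hna, one_smul] at h5
      have h6 : -β = (‖β‖ / ‖α‖) • α := by
        rw [div_eq_inv_mul]
        exact h5.symm
      rw [neg_smul, ← h6, neg_neg]
  have h2 : |⟪α, β⟫| < ‖α‖ * ‖β‖ := lt_of_le_of_ne hle hne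
  have e1 : ⟪α, α⟫ = ‖α‖ * ‖α‖ := real_inner_self_eq_norm_mul_norm α
  have e2 : ⟪β, β⟫ = ‖β‖ * ‖β‖ := real_inner_self_eq_norm_mul_norm β
  rw [e1, e2]
  nlinarith [abs_nonneg ⟪α, β⟫, abs_mul_abs_self ⟪α, β⟫, norm_nonneg α, norm_nonneg β]

end C
section C2
variable {V : Type*} [NormedAddCommGroup V] [InnerProductSpace ℝ V] {Rt : Set V} {x : V}

lemma simp_obtuse (ctx : RtCtx Rt x) {a b : V} (ha : a ∈ Simp Rt x) (hb : b ∈ Simp Rt x)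
    (hab : a ≠ b) : ⟪a, b⟫ ≤ 0 := by
  by_contra hcon
  push_neg at hcon
  have haRt : a ∈ Rt := ha.1.1
  have hbRt : b ∈ Rt := hb.1.1
  have ha0 : a ≠ 0 := ctx.nz a haRt
  have hb0 : b ≠ 0 := ctx.nz b hbRt
  by_cases hprop : ∃ c : ℝ, b = c • a
  · obtain ⟨c, hc⟩ := hprop
    have hc0 : c ≠ 0 := by
      rintro rfl
      rw [zero_smul] at hc
      exact hb0 hc
    have hcp : 0 < c := by
      have h2 : ⟪a, b⟫ = c * ⟪a, a⟫ := by rw [hc, real_inner_smul_right]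
      nlinarith [rinner_pos ha0]
    rcases ratio_class ha0 hc0 hc (ctx.crys a haRt b hbRt) (ctx.crys b hbRt a haRt) with
      h | h | h | h | h | h
    · rw [h, one_smul] at hc
      exact hab (hc.symm)
    · linarith
    · exact hb.2 ⟨a, ha.1, a, ha.1, by rw [hc, h]; module⟩
    · linarith
    · exact ha.2 ⟨b, hb.1, b, hb.1, by rw [hc, h]; module⟩
    · linarith
  · obtain ⟨m, hm⟩ := ctx.crys a haRt b hbRt
    obtain ⟨n, hn⟩ := ctx.crys b hbRt a haRt
    have hA := rinner_pos ha0
    have hB := rinner_pos hb0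
    have hba : ⟪b, a⟫ = ⟪a, b⟫ := real_inner_comm a b
    have hmpos : (0:ℝ) < m := by
      rw [← hm]
      apply div_pos (by nlinarith) hA
    have hnpos : (0:ℝ) < n := by
      rw [← hn]
      apply div_pos (by nlinarith) hB
    have hprod : (m : ℝ) * n < 4 := by
      rw [← hm, ← hn]
      have hcs := strict_cs ha0 hprop
      rw [hba, div_mul_div_comm, div_lt_iff₀ (by positivity)]
      nlinarith
    have hm1 : (1:ℤ) ≤ m := by
      have : (0:ℤ) < m := by exact_mod_cast hmpos
      omega
    have hn1 : (1:ℤ) ≤ n := by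
      have : (0:ℤ) < n := by exact_mod_cast hnpos
      omega
    have hmn4 : m * n < 4 := by exact_mod_cast hprod
    have hone : m = 1 ∨ n = 1 := by
      by_contra hno
      push_neg at hno
      have h2 : 2 ≤ m := by omega
      have h3 : 2 ≤ n := by omega
      nlinarith
    rcases hone with h1 | h1
    · have hr : reflFun a b = b - a := by
        show b - (2 * ⟪b, a⟫ / ⟪a, a⟫) • a = b - a
        rw [hm, h1]
        norm_num
      have hRt : b - a ∈ Rt := hr ▸ ctx.clos a haRt b hbRt
      rcases mem_pos_or_neg ctx hRt with hp | hp
      · exact hb.2 ⟨b - a, hp, a, ha.1, by module⟩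
      · rw [neg_sub] at hp
        exact ha.2 ⟨a - b, hp, b, hb.1, by module⟩
    · have hr : reflFun b a = a - b := by
        show a - (2 * ⟪a, b⟫ / ⟪b, b⟫) • b = a - b
        rw [hn, h1]
        norm_num
      have hRt : a - b ∈ Rt := hr ▸ ctx.clos b hbRt a haRt
      rcases mem_pos_or_neg ctx hRt with hp | hp
      · exact ha.2 ⟨a - b, hp, b, hb.1, by module⟩
      · rw [neg_sub] at hp
        exact hb.2 ⟨b - a, hp, a, ha.1, by module⟩

lemma simp_indep (ctx : RtCtx Rt x) (SF : Finset V) (hSF : ∀ a, a ∈ SF ↔ a ∈ Simp Rt x)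
    (e : V → ℝ) (hsum : ∑ a ∈ SF, e a • a = 0) : ∀ a ∈ SF, e a = 0 := by
  classical
  set Fp := SF.filter (fun a => 0 < e a) with hFp
  set Fn := SF.filter (fun a => ¬ 0 < e a) with hFn
  set Fm := Fn.filter (fun a => e a < 0) with hFm
  have h1 : ∑ a ∈ Fp, e a • a + ∑ a ∈ Fn, e a • a = 0 := by
    rw [hFp, hFn, Finset.sum_filter_add_sum_filter_not]
    exact hsum
  have h2 : ∑ a ∈ Fn, e a • a = ∑ a ∈ Fm, e a • a := by
    rw [← Finset.sum_filter_add_sum_filter_not Fn (fun a => e a < 0), ← hFm]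
    have hz : ∑ a ∈ Fn.filter (fun a => ¬ e a < 0), e a • a = 0 := by
      apply Finset.sum_eq_zero
      intro a haf
      simp only [hFn, Finset.mem_filter] at haf
      have hz2 : e a = 0 := le_antisymm (not_lt.1 haf.1.2) (not_lt.1 haf.2)
      rw [hz2, zero_smul]
    rw [hz, add_zero]
  have hu : ∑ a ∈ Fp, e a • a = ∑ b ∈ Fm, (-(e b)) • b := by
    have h3 : ∑ a ∈ Fp, e a • a = -∑ b ∈ Fm, e b • b := by
      rw [h2] at h1
      exact eq_neg_of_add_eq_zero_left h1
    rw [h3, ← Finset.sum_neg_distrib]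
    exact Finset.sum_congr rfl (fun b _ => (neg_smul _ _).symm)
  have hPmem : ∀ a ∈ Fp, a ∈ Simp Rt x ∧ 0 < e a := by
    intro a haF
    rw [hFp, Finset.mem_filter] at haF
    exact ⟨(hSF a).1 haF.1, haF.2⟩
  have hMmem : ∀ b ∈ Fm, b ∈ Simp Rt x ∧ e b < 0 := by
    intro b hbF
    simp only [hFm, hFn, Finset.mem_filter] at hbF
    exact ⟨(hSF b).1 hbF.1.1, hbF.2⟩
  have huu : ⟪∑ a ∈ Fp, e a • a, ∑ a ∈ Fp, e a • a⟫ ≤ 0 := by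
    nth_rewrite 2 [hu]
    rw [sum_inner]
    apply Finset.sum_nonpos
    intro a haF
    rw [inner_sum]
    apply Finset.sum_nonpos
    intro b hbF
    rw [real_inner_smul_left, real_inner_smul_right]
    obtain ⟨haS, hea⟩ := hPmem a haF
    obtain ⟨hbS, heb⟩ := hMmem b hbF
    have hne : a ≠ b := by
      rintro rfl
      linarith
    have hobt := simp_obtuse ctx haS hbS hne
    exact mul_nonpos_of_nonneg_of_nonpos (le_of_lt hea)
      (mul_nonpos_of_nonneg_of_nonpos (by linarith) hobt)
  have hu0 : ∑ a ∈ Fp, e a • a = 0 :=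
    (inner_self_eq_zero (𝕜 := ℝ)).1
      (le_antisymm huu (real_inner_self_nonneg (x := ∑ a ∈ Fp, e a • a)))
  have hFp0 : Fp = ∅ := by
    rw [← Finset.not_nonempty_iff_eq_empty]
    intro hne
    have hxsum : ⟪x, ∑ a ∈ Fp, e a • a⟫ = 0 := by rw [hu0, inner_zero_right]
    rw [inner_sum] at hxsum
    have hpos : 0 < ∑ a ∈ Fp, ⟪x, e a • a⟫ := by
      apply Finset.sum_pos _ hne
      intro i hiF
      rw [real_inner_smul_right]
      obtain ⟨hiS, hei⟩ := hPmem i hiF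
      exact mul_pos hei hiS.1.2
    linarith
  have hFm0 : Fm = ∅ := by
    rw [← Finset.not_nonempty_iff_eq_empty]
    intro hne
    have h4 : ∑ b ∈ Fm, (-(e b)) • b = 0 := by rw [← hu, hu0]
    have hxsum : ⟪x, ∑ b ∈ Fm, (-(e b)) • b⟫ = 0 := by rw [h4, inner_zero_right]
    rw [inner_sum] at hxsum
    have hpos : 0 < ∑ b ∈ Fm, ⟪x, (-(e b)) • b⟫ := by
      apply Finset.sum_pos _ hne
      intro i hiF
      rw [real_inner_smul_right]
      obtain ⟨hiS, hei⟩ := hMmem i hiF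
      exact mul_pos (by linarith) hiS.1.2
    linarith
  intro a haSF
  rcases lt_trichotomy (e a) 0 with h | h | h
  · exfalso
    have : a ∈ Fm := by
      simp only [hFm, hFn, Finset.mem_filter]
      exact ⟨⟨haSF, by linarith⟩, h⟩
    rw [hFm0] at this
    exact Finset.notMem_empty a this
  · exact h
  · exfalso
    have : a ∈ Fp := by
      rw [hFp, Finset.mem_filter]
      exact ⟨haSF, h⟩
    rw [hFp0] at this
    exact Finset.notMem_empty a this

lemma pos_expansion (ctx : RtCtx Rt x) (SF : Finset V) (hSF : ∀ a, a ∈ SF ↔ a ∈ Simp Rt x) :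
    ∀ β ∈ Pos Rt x, ∃ e : V → ℝ, (∀ v, 0 ≤ e v) ∧ β = ∑ a ∈ SF, e a • a := by
  classical
  set RF := ctx.fin.toFinset with hRF
  have hmes : ∀ β γ δ : V, β ∈ Pos Rt x → γ ∈ Pos Rt x → δ ∈ Pos Rt x → β = γ + δ →
      (RF.filter fun ρ => ⟪x, ρ⟫ < ⟪x, γ⟫).card < (RF.filter fun ρ => ⟪x, ρ⟫ < ⟪x, β⟫).card := by
    intro β γ δ hβ hγ hδ heq
    have hlt : ⟪x, γ⟫ < ⟪x, β⟫ := by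
      rw [heq, inner_add_right]
      linarith [hδ.2]
    apply Finset.card_lt_card
    rw [Finset.ssubset_iff_of_subset]
    · refine ⟨γ, ?_, ?_⟩
      · rw [Finset.mem_filter]
        exact ⟨by rw [hRF, Set.Finite.mem_toFinset]; exact hγ.1, hlt⟩
      · rw [Finset.mem_filter]
        rintro ⟨-, h⟩
        exact lt_irrefl _ h
    · intro ρ hρ
      rw [Finset.mem_filter] at hρ ⊢
      exact ⟨hρ.1, lt_trans hρ.2 hlt⟩
  have hbase : ∀ β, β ∈ Pos Rt x → (¬ ∃ γ ∈ Pos Rt x, ∃ δ ∈ Pos Rt x, β = γ + δ) →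
      ∃ e : V → ℝ, (∀ v, 0 ≤ e v) ∧ β = ∑ a ∈ SF, e a • a := by
    intro β hβ hd
    have hβS : β ∈ SF := (hSF β).2 ⟨hβ, hd⟩
    refine ⟨fun v => if v = β then 1 else 0, fun v => by by_cases h : v = β <;> simp [h], ?_⟩
    have hcongr : ∀ a ∈ SF, (if a = β then (1:ℝ) else 0) • a = if a = β then β else 0 := by
      intro a _
      split_ifs with h
      · rw [h, one_smul]
      · rw [zero_smul]
    rw [Finset.sum_congr rfl hcongr, Finset.sum_ite_eq' SF β (fun _ => β), if_pos hβS]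
  suffices H : ∀ n : ℕ, ∀ β : V, β ∈ Pos Rt x →
      (RF.filter fun ρ => ⟪x, ρ⟫ < ⟪x, β⟫).card ≤ n →
      ∃ e : V → ℝ, (∀ v, 0 ≤ e v) ∧ β = ∑ a ∈ SF, e a • a by
    intro β hβ
    exact H _ β hβ le_rfl
  intro n
  induction n with
  | zero =>
    intro β hβ hcard
    by_cases hd : ∃ γ ∈ Pos Rt x, ∃ δ ∈ Pos Rt x, β = γ + δ
    · exfalso
      obtain ⟨γ, hγ, δ, hδ, heq⟩ := hd
      have := hmes β γ δ hβ hγ hδ heq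
      omega
    · exact hbase β hβ hd
  | succ n ih =>
    intro β hβ hcard
    by_cases hd : ∃ γ ∈ Pos Rt x, ∃ δ ∈ Pos Rt x, β = γ + δ
    · obtain ⟨γ, hγ, δ, hδ, heq⟩ := hd
      have hγc : (RF.filter fun ρ => ⟪x, ρ⟫ < ⟪x, γ⟫).card ≤ n := by
        have := hmes β γ δ hβ hγ hδ heq
        omega
      have hδc : (RF.filter fun ρ => ⟪x, ρ⟫ < ⟪x, δ⟫).card ≤ n := by
        have := hmes β δ γ hβ hδ hγ (by rw [heq, add_comm])
        omega
      obtain ⟨e1, he1, hee1⟩ := ih γ hγ hγc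
      obtain ⟨e2, he2, hee2⟩ := ih δ hδ hδc
      refine ⟨fun v => e1 v + e2 v, fun v => add_nonneg (he1 v) (he2 v), ?_⟩
      rw [heq, hee1, hee2, ← Finset.sum_add_distrib]
      exact Finset.sum_congr rfl (fun a _ => (add_smul _ _ _).symm)
    · exact hbase β hβ hd

lemma exists_simp_inner_pos (ctx : RtCtx Rt x) (SF : Finset V)
    (hSF : ∀ a, a ∈ SF ↔ a ∈ Simp Rt x) {β : V} (hβ : β ∈ Pos Rt x) :
    ∃ a, a ∈ Simp Rt x ∧ 0 < ⟪β, a⟫ := by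
  obtain ⟨e, he0, hee⟩ := pos_expansion ctx SF hSF β hβ
  have hb0 : β ≠ 0 := ctx.nz β hβ.1
  have hpos : 0 < ⟪β, β⟫ := rinner_pos hb0
  by_contra hcon
  push_neg at hcon
  have hsum : ⟪β, β⟫ = ∑ a ∈ SF, e a * ⟪β, a⟫ := by
    nth_rewrite 2 [hee]
    rw [inner_sum]
    exact Finset.sum_congr rfl (fun a _ => real_inner_smul_right _ _ _)
  have hle : ∑ a ∈ SF, e a * ⟪β, a⟫ ≤ 0 := by
    apply Finset.sum_nonpos
    intro a ha
    exact mul_nonpos_of_nonneg_of_nonpos (he0 a) (hcon a ((hSF a).1 ha))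
  linarith

end C2
section C3
variable {V : Type*} [NormedAddCommGroup V] [InnerProductSpace ℝ V] {Rt : Set V} {x : V}

lemma card_filter_lt_of_lt (ctx : RtCtx Rt x) {β γ : V} (hγ : γ ∈ Pos Rt x)
    (hlt : ⟪x, γ⟫ < ⟪x, β⟫) :
    ((ctx.fin.toFinset).filter fun ρ => ⟪x, ρ⟫ < ⟪x, γ⟫).card <
      ((ctx.fin.toFinset).filter fun ρ => ⟪x, ρ⟫ < ⟪x, β⟫).card := by
  classical
  apply Finset.card_lt_card
  rw [Finset.ssubset_iff_of_subset]
  · refine ⟨γ, ?_, ?_⟩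
    · rw [Finset.mem_filter]
      exact ⟨(ctx.fin.mem_toFinset).2 hγ.1, hlt⟩
    · rw [Finset.mem_filter]
      rintro ⟨-, h⟩
      exact lt_irrefl _ h
  · intro ρ hρ
    rw [Finset.mem_filter] at hρ ⊢
    exact ⟨hρ.1, lt_trans hρ.2 hlt⟩

/-- A simple reflection maps positive roots not proportional to it to positive roots. -/
lemma simp_reflect (ctx : RtCtx Rt x) (SF : Finset V) (hSF : ∀ a, a ∈ SF ↔ a ∈ Simp Rt x)
    {a β : V} (ha : a ∈ Simp Rt x) (hβ : β ∈ Pos Rt x)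
    (hnp : ∀ c : ℝ, β ≠ c • a) : reflFun a β ∈ Pos Rt x := by
  classical
  have haRt : a ∈ Rt := ha.1.1
  have hβRt : β ∈ Rt := hβ.1
  have hγRt : reflFun a β ∈ Rt := ctx.clos a haRt β hβRt
  rcases mem_pos_or_neg ctx hγRt with hp | hp
  · exact hp
  · exfalso
    obtain ⟨e, he0, hee⟩ := pos_expansion ctx SF hSF β hβ
    obtain ⟨d, hd0, hdd⟩ := pos_expansion ctx SF hSF _ hp
    have haSF : a ∈ SF := (hSF a).2 ha
    have htot : ∑ a' ∈ SF,
        ((e a' + d a') - (if a' = a then 2 * ⟪β, a⟫ / ⟪a, a⟫ else 0)) • a' = 0 := by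
      have hsplit : ∀ a' ∈ SF,
          ((e a' + d a') - (if a' = a then 2 * ⟪β, a⟫ / ⟪a, a⟫ else 0)) • a'
            = (e a' • a' + d a' • a') - (if a' = a then (2 * ⟪β, a⟫ / ⟪a, a⟫) • a' else 0) := by
        intro a' _
        split_ifs with h
        · rw [sub_smul, add_smul]
        · rw [sub_zero, sub_zero, add_smul]
      rw [Finset.sum_congr rfl hsplit, Finset.sum_sub_distrib, Finset.sum_add_distrib,
        ← hee, ← hdd, Finset.sum_ite_eq' SF a (fun a' => (2 * ⟪β, a⟫ / ⟪a, a⟫) • a'),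
        if_pos haSF]
      show β + -(reflFun a β) - (2 * ⟪β, a⟫ / ⟪a, a⟫) • a = 0
      show β + -(β - (2 * ⟪β, a⟫ / ⟪a, a⟫) • a) - (2 * ⟪β, a⟫ / ⟪a, a⟫) • a = 0
      module
    have hzero := simp_indep ctx SF hSF _ htot
    have hcoll : ∀ a' ∈ SF, a' ≠ a → e a' = 0 := by
      intro a' ha' hne
      have h5 := hzero a' ha'
      rw [if_neg hne] at h5
      have h6 := he0 a'
      have h7 := hd0 a'
      simp only [sub_zero] at h5
      linarith
    apply hnp (e a)
    rw [hee]
    exact Finset.sum_eq_single_of_mem a haSF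
      (fun b hb hne => by rw [hcoll b hb hne, zero_smul])

/-- Every reflection of `Rt` lies in the subgroup generated by simple reflections. -/
lemma sperm_mem_simp_closure (ctx : RtCtx Rt x) (SF : Finset V)
    (hSF : ∀ a, a ∈ SF ↔ a ∈ Simp Rt x) :
    ∀ β ∈ Rt, sperm β ∈ Subgroup.closure
      {p : Equiv.Perm V | ∃ γ ∈ Simp Rt x, ∃ h : γ ≠ 0, p = reflPerm γ h} := by
  classical
  have hbase : ∀ β ∈ Pos Rt x, (∃ a ∈ Simp Rt x, ∃ c : ℝ, β = c • a) →
      sperm β ∈ Subgroup.closure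
        {p : Equiv.Perm V | ∃ γ ∈ Simp Rt x, ∃ h : γ ≠ 0, p = reflPerm γ h} := by
    rintro β hβ ⟨a, haS, c, hc⟩
    have hβ0 : β ≠ 0 := ctx.nz β hβ.1
    have hc0 : c ≠ 0 := by
      rintro rfl
      rw [zero_smul] at hc
      exact hβ0 hc
    rw [hc, sperm_smul hc0]
    exact Subgroup.subset_closure ⟨a, haS, ctx.nz a haS.1.1, sperm_eq _⟩
  suffices H : ∀ n : ℕ, ∀ β ∈ Pos Rt x,
      ((ctx.fin.toFinset).filter fun ρ => ⟪x, ρ⟫ < ⟪x, β⟫).card ≤ n →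
      sperm β ∈ Subgroup.closure
        {p : Equiv.Perm V | ∃ γ ∈ Simp Rt x, ∃ h : γ ≠ 0, p = reflPerm γ h} by
    intro β hβ
    rcases mem_pos_or_neg ctx hβ with hp | hp
    · exact H _ β hp le_rfl
    · have h2 := H _ (-β) hp le_rfl
      rwa [sperm_neg] at h2
  intro n
  induction n with
  | zero =>
    intro β hβ hcard
    by_cases hprop : ∃ a ∈ Simp Rt x, ∃ c : ℝ, β = c • a
    · exact hbase β hβ hprop
    · exfalso
      obtain ⟨a, haS, hba⟩ := exists_simp_inner_pos ctx SF hSF hβ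
      have ha0 : a ≠ 0 := ctx.nz a haS.1.1
      have hnp : ∀ c : ℝ, β ≠ c • a := fun c h => hprop ⟨a, haS, c, h⟩
      have hγ := simp_reflect ctx SF hSF haS hβ hnp
      have hlt : ⟪x, reflFun a β⟫ < ⟪x, β⟫ := by
        show ⟪x, β - (2 * ⟪β, a⟫ / ⟪a, a⟫) • a⟫ < ⟪x, β⟫
        rw [inner_sub_right, real_inner_smul_right]
        have hk : 0 < 2 * ⟪β, a⟫ / ⟪a, a⟫ := div_pos (by linarith) (rinner_pos ha0)
        nlinarith [haS.1.2]
      have := card_filter_lt_of_lt ctx hγ hlt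
      omega
  | succ n ih =>
    intro β hβ hcard
    by_cases hprop : ∃ a ∈ Simp Rt x, ∃ c : ℝ, β = c • a
    · exact hbase β hβ hprop
    · obtain ⟨a, haS, hba⟩ := exists_simp_inner_pos ctx SF hSF hβ
      have ha0 : a ≠ 0 := ctx.nz a haS.1.1
      have hnp : ∀ c : ℝ, β ≠ c • a := fun c h => hprop ⟨a, haS, c, h⟩
      have hγ := simp_reflect ctx SF hSF haS hβ hnp
      have hlt : ⟪x, reflFun a β⟫ < ⟪x, β⟫ := by
        show ⟪x, β - (2 * ⟪β, a⟫ / ⟪a, a⟫) • a⟫ < ⟪x, β⟫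
        rw [inner_sub_right, real_inner_smul_right]
        have hk : 0 < 2 * ⟪β, a⟫ / ⟪a, a⟫ := div_pos (by linarith) (rinner_pos ha0)
        nlinarith [haS.1.2]
      have hcard2 : ((ctx.fin.toFinset).filter fun ρ => ⟪x, ρ⟫ < ⟪x, reflFun a β⟫).card ≤ n := by
        have := card_filter_lt_of_lt ctx hγ hlt
        omega
      have hIH := ih (reflFun a β) hγ hcard2
      have hββ : β = reflFun a (reflFun a β) := (reflFun_involutive a ha0 β).symm
      have hgen : sperm a ∈ Subgroup.closure
          {p : Equiv.Perm V | ∃ γ ∈ Simp Rt x, ∃ h : γ ≠ 0, p = reflPerm γ h} :=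
        Subgroup.subset_closure ⟨a, haS, ha0, sperm_eq _⟩
      rw [hββ, sperm_conj a _ ha0]
      exact mul_mem (mul_mem hgen hIH) hgen

end C3
section C4
variable {V : Type*} [NormedAddCommGroup V] [InnerProductSpace ℝ V]

/-- Product of the reflections attached to a list of vectors. -/
noncomputable def wprod (l : List V) : Equiv.Perm V := (l.map sperm).prod

lemma wprod_nil : wprod ([] : List V) = 1 := rfl

lemma wprod_cons (a : V) (l : List V) : wprod (a :: l) = sperm a * wprod l := by
  simp [wprod]

lemma wprod_concat (l : List V) (b : V) : wprod (l ++ [b]) = wprod l * sperm b := by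
  simp [wprod]

lemma sperm_neg_apply (a γ : V) : sperm a (-γ) = -(sperm a γ) := by
  by_cases h : a = 0
  · subst h; simp [sperm_zero]
  · rw [sperm_apply h, sperm_apply h, reflFun_neg]

lemma wprod_neg_apply (l : List V) (γ : V) : wprod l (-γ) = -(wprod l γ) := by
  induction l with
  | nil => simp [wprod_nil]
  | cons a t ih =>
    rw [wprod_cons]
    show sperm a (wprod t (-γ)) = -(sperm a (wprod t γ))
    rw [ih, sperm_neg_apply]

variable {Rt : Set V} {x : V}

lemma wprod_mem_Rt (ctx : RtCtx Rt x) : ∀ l : List V, (∀ a ∈ l, a ∈ Rt) →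
    ∀ γ ∈ Rt, wprod l γ ∈ Rt := by
  intro l
  induction l with
  | nil => intro _ γ hγ; simpa [wprod_nil] using hγ
  | cons a t ih =>
    intro hl γ hγ
    have haRt : a ∈ Rt := hl a List.mem_cons_self
    have ha0 : a ≠ 0 := ctx.nz a haRt
    have hv : wprod t γ ∈ Rt := ih (fun b hb => hl b (List.mem_cons_of_mem _ hb)) γ hγ
    rw [wprod_cons]
    show sperm a (wprod t γ) ∈ Rt
    rw [sperm_apply ha0]
    exact ctx.clos a haRt _ hv

lemma wprod_conj : ∀ l : List V, ∀ b : V,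
    sperm (wprod l b) = wprod l * sperm b * (wprod l)⁻¹ := by
  intro l
  induction l with
  | nil => intro b; simp [wprod_nil]
  | cons a t ih =>
    intro b
    by_cases ha0 : a = 0
    · subst ha0
      have h0 : wprod ((0:V) :: t) = wprod t := by rw [wprod_cons, sperm_zero, one_mul]
      rw [h0, ih b]
    · have h1 : wprod (a :: t) b = reflFun a (wprod t b) := by
        rw [wprod_cons]
        show sperm a (wprod t b) = _
        rw [sperm_apply ha0]
      rw [h1, sperm_conj a _ ha0, ih b, wprod_cons, mul_inv_rev, sperm_inv]
      group

/-- The exchange lemma. -/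
lemma exchange (ctx : RtCtx Rt x) (SF : Finset V) (hSF : ∀ a, a ∈ SF ↔ a ∈ Simp Rt x) :
    ∀ l : List V, (∀ a ∈ l, a ∈ Simp Rt x) → ∀ b ∈ Simp Rt x,
    ⟪x, wprod l b⟫ < 0 →
    ∃ l' : List V, (∀ a ∈ l', a ∈ Simp Rt x) ∧ l'.length + 1 = l.length ∧
      wprod l' = wprod l * sperm b := by
  intro l
  induction l with
  | nil =>
    intro _ b hb hneg
    exfalso
    have h1 : wprod [] b = b := by rw [wprod_nil]; rfl
    rw [h1] at hneg
    linarith [hb.1.2]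
  | cons a t ih =>
    intro hl b hb hneg
    have ha : a ∈ Simp Rt x := hl a List.mem_cons_self
    have ht : ∀ a' ∈ t, a' ∈ Simp Rt x := fun a' h => hl a' (List.mem_cons_of_mem _ h)
    have hvRt : wprod t b ∈ Rt := wprod_mem_Rt ctx t (fun a' h => (ht a' h).1.1) b hb.1.1
    have ha0 : a ≠ 0 := ctx.nz a ha.1.1
    have happ : wprod (a :: t) b = sperm a (wprod t b) := by rw [wprod_cons]; rfl
    rcases lt_or_gt_of_ne (ctx.gen _ hvRt) with hvneg | hvpos
    · obtain ⟨t', ht', hlen, heq⟩ := ih ht b hb hvneg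
      refine ⟨a :: t', ?_, by simp [hlen], ?_⟩
      · intro a' ha'
        rcases List.mem_cons.1 ha' with rfl | h
        · exact ha
        · exact ht' a' h
      · rw [wprod_cons, heq, wprod_cons, mul_assoc]
    · have hvPos : wprod t b ∈ Pos Rt x := ⟨hvRt, hvpos⟩
      have hprop : ∃ c : ℝ, wprod t b = c • a := by
        by_contra hnp
        push_neg at hnp
        have h2 := (simp_reflect ctx SF hSF ha hvPos hnp).2
        rw [happ, sperm_apply ha0] at hneg
        linarith
      obtain ⟨c, hc⟩ := hprop
      have hc0 : c ≠ 0 := by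
        rintro rfl
        rw [zero_smul] at hc
        exact ctx.nz _ hvRt hc
      have hsv : sperm (wprod t b) = sperm a := by rw [hc, sperm_smul hc0]
      have hconj := wprod_conj t b
      refine ⟨t, ht, by simp, ?_⟩
      rw [wprod_cons, ← hsv, hconj]
      symm
      calc (wprod t * sperm b * (wprod t)⁻¹) * wprod t * sperm b
          = wprod t * (sperm b * sperm b) := by group
        _ = wprod t := by rw [sperm_mul_self, mul_one]

/-- An element of the simple reflection group fixing all positive roots is trivial. -/
lemma wprod_eq_one (ctx : RtCtx Rt x) (SF : Finset V)
    (hSF : ∀ a, a ∈ SF ↔ a ∈ Simp Rt x) :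
    ∀ n : ℕ, ∀ l : List V, l.length ≤ n → (∀ a ∈ l, a ∈ Simp Rt x) →
    (∀ b ∈ Simp Rt x, wprod l b ∈ Pos Rt x) → wprod l = 1 := by
  intro n
  induction n using Nat.strong_induction_on with
  | _ n ihn =>
    intro l hlen hl hP
    rcases List.eq_nil_or_concat l with rfl | ⟨L, b, rfl⟩
    · rfl
    · simp only [List.concat_eq_append] at hlen hl hP ⊢
      have hbS : b ∈ Simp Rt x := hl b (by simp)
      have hLS : ∀ a ∈ L, a ∈ Simp Rt x := fun a ha => hl a (by simp [ha])
      have hb0 : b ≠ 0 := ctx.nz b hbS.1.1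
      have hw : wprod (L ++ [b]) = wprod L * sperm b := wprod_concat L b
      have hwL : wprod L b = -(wprod (L ++ [b]) b) := by
        rw [hw]
        show wprod L b = -((wprod L) (sperm b b))
        rw [sperm_apply hb0, reflFun_self b hb0, wprod_neg_apply, neg_neg]
      have hwb : wprod (L ++ [b]) b ∈ Pos Rt x := hP b hbS
      have hneg : ⟪x, wprod L b⟫ < 0 := by
        rw [hwL, inner_neg_right]
        linarith [hwb.2]
      obtain ⟨l', hl', hlen', heq⟩ := exchange ctx SF hSF L hLS b hbS hneg
      have hfin : wprod l' = wprod (L ++ [b]) := by rw [heq, hw]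
      have hlb : (L ++ [b]).length = L.length + 1 := by simp
      rw [← hfin]
      apply ihn l'.length (by omega) l' le_rfl hl'
      intro b' hb'
      rw [hfin]
      exact hP b' hb'

/-- The key lemma: a root reflection fixing a generic vector of `Rt` is impossible. -/
lemma key_lemma (ctx : RtCtx Rt x) (SF : Finset V) (hSF : ∀ a, a ∈ SF ↔ a ∈ Simp Rt x)
    {α : V} (hα : α ≠ 0) (hxa : ⟪x, α⟫ = 0)
    (hmem : sperm α ∈ Subgroup.closure
      {p : Equiv.Perm V | ∃ γ ∈ Rt, ∃ h : γ ≠ 0, p = reflPerm γ h})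
    (hstab : ∀ γ ∈ Rt, sperm α γ ∈ Rt) : False := by
  have h1 : sperm α ∈ Subgroup.closure
      {p : Equiv.Perm V | ∃ γ ∈ Simp Rt x, ∃ h : γ ≠ 0, p = reflPerm γ h} := by
    have hsub : {p : Equiv.Perm V | ∃ γ ∈ Rt, ∃ h : γ ≠ 0, p = reflPerm γ h} ⊆
        ↑(Subgroup.closure {p : Equiv.Perm V | ∃ γ ∈ Simp Rt x, ∃ h : γ ≠ 0, p = reflPerm γ h}) := by
      rintro p ⟨γ, hγ, hγ0, rfl⟩
      rw [← sperm_eq hγ0]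
      exact sperm_mem_simp_closure ctx SF hSF γ hγ
    exact (Subgroup.closure_le _).2 hsub hmem
  obtain ⟨l, hlS, hlp⟩ := exists_vec_list _ h1
  have hwl : wprod l = sperm α := hlp
  have hP : ∀ b ∈ Simp Rt x, wprod l b ∈ Pos Rt x := by
    intro b hbS
    rw [hwl, sperm_apply hα]
    refine ⟨?_, ?_⟩
    · have := hstab b hbS.1.1
      rwa [sperm_apply hα] at this
    · show 0 < ⟪x, b - (2 * ⟪b, α⟫ / ⟪α, α⟫) • α⟫
      rw [inner_sub_right, real_inner_smul_right, hxa]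
      simpa using hbS.1.2
  have hone : wprod l = 1 := wprod_eq_one ctx SF hSF l.length l le_rfl hlS hP
  have hid : sperm α = 1 := by rw [← hwl, hone]
  have h3 := congrArg (fun p : Equiv.Perm V => p α) hid
  simp only [Equiv.Perm.one_apply] at h3
  rw [sperm_apply hα, reflFun_self α hα] at h3
  apply hα
  have h4 : (2 : ℝ) • α = 0 := by
    rw [two_smul]
    nth_rewrite 1 [← h3]
    exact neg_add_cancel α
  simpa using (smul_eq_zero.1 h4).resolve_left (by norm_num)

end C4
section D1
variable {V : Type*} [NormedAddCommGroup V] [InnerProductSpace ℝ V]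

/-- A root `β` neither proportional nor orthogonal to a "small" root `α` (one with
`2α` also a root) has squared length twice that of `α`. -/
lemma norm_double {R : Set V}
    (hcrys : ∀ α ∈ R, ∀ β ∈ R, ∃ m : ℤ, 2 * ⟪β, α⟫ / ⟪α, α⟫ = (m : ℝ))
    (hR0 : ∀ α ∈ R, α ≠ (0:V))
    {α β : V} (hα : α ∈ R) (h2α : (2:ℝ) • α ∈ R) (hβ : β ∈ R)
    (hip : ⟪α, β⟫ ≠ 0) (hnp : ¬ ∃ c : ℝ, β = c • α) : ⟪β, β⟫ = 2 * ⟪α, α⟫ := by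
  obtain ⟨m, hm⟩ := hcrys α hα β hβ
  obtain ⟨m2, hm2⟩ := hcrys _ h2α β hβ
  obtain ⟨k, hk⟩ := hcrys β hβ α hα
  have hA := rinner_pos (hR0 α hα)
  have hB := rinner_pos (hR0 β hβ)
  have hcomm : ⟪β, α⟫ = ⟪α, β⟫ := real_inner_comm α β
  have hip' : ⟪β, α⟫ ≠ 0 := by rw [hcomm]; exact hip
  have hm2' : (m : ℝ) = 2 * m2 := by
    rw [← hm, ← hm2, real_inner_smul_right, real_inner_smul_left, real_inner_smul_right]
    field_simp
  have hmeven : m = 2 * m2 := by exact_mod_cast hm2'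
  have hprod_pos : 0 < (m : ℝ) * k := by
    rw [← hm, ← hk, hcomm, div_mul_div_comm]
    apply div_pos
    · have h2 : (2 * ⟪α, β⟫) ≠ 0 := by
        intro h
        apply hip
        linarith [h]
      nlinarith [mul_self_pos.2 h2]
    · exact mul_pos hA hB
  have hprod_lt : (m : ℝ) * k < 4 := by
    rw [← hm, ← hk, hcomm, div_mul_div_comm, div_lt_iff₀ (mul_pos hA hB)]
    have hcs := strict_cs (hR0 α hα) hnp
    nlinarith
  have hpz : (0:ℤ) < m * k := by exact_mod_cast hprod_pos
  have hlz : (m : ℤ) * k < 4 := by exact_mod_cast hprod_lt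
  have ht1 : m2 * k = 1 := by
    have e1 : m * k = 2 * (m2 * k) := by rw [hmeven]; ring
    omega
  have hk1 : (m2 = 1 ∧ k = 1) ∨ (m2 = -1 ∧ k = -1) := Int.mul_eq_one_iff_eq_one_or_neg_one.1 ht1
  have e1 : 2 * ⟪β, α⟫ = (m : ℝ) * ⟪α, α⟫ := by
    rw [← hm]
    field_simp
  have e2 : 2 * ⟪α, β⟫ = (k : ℝ) * ⟪β, β⟫ := by
    rw [← hk]
    field_simp
  rcases hk1 with ⟨hm1, hk1⟩ | ⟨hm1, hk1⟩ <;>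
    rw [hm1] at hmeven <;> rw [hmeven] at e1 <;> rw [hk1] at e2 <;>
    push_cast at e1 e2 <;> rw [hcomm] at e1 <;> linarith

end D1
/-- Let `R` be an irreducible finite crystallographic root system
(possibly non-reduced) with Weyl group `W`, and let `R̃ ⊆ R` be a `W`-invariant set
of (nonzero) roots whose reflections generate `W`. Then `R̃` is a union of
`W`-orbits and either `R̃ = R`, or `R` is non-reduced and `R̃` is the set of nonzero
roots minus either the short roots or the extra-long (divisible) roots. -/
theorem invariant_generating_subset_of_root_system {V : Type*}
    [NormedAddCommGroup V] [InnerProductSpace ℝ V] [FiniteDimensional ℝ V]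
    (R Rt : Set V)
    (hfin : R.Finite)
    (hne : (0 : V) ∉ R)
    (hspan : Submodule.span ℝ R = ⊤)
    (hrefl : ∀ α ∈ R, ∀ β ∈ R, reflFun α β ∈ R)
    (hcrys : ∀ α ∈ R, ∀ β ∈ R, ∃ m : ℤ, 2 * ⟪β, α⟫ / ⟪α, α⟫ = (m : ℝ))
    (hirr : ¬ ∃ A B : Set V, A.Nonempty ∧ B.Nonempty ∧ A ∪ B = R ∧ A ∩ B = ∅ ∧
      ∀ a ∈ A, ∀ b ∈ B, ⟪a, b⟫ = 0)
    (hsub : Rt ⊆ R)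
    (hinv : ∀ g ∈ Subgroup.closure
        {p : Equiv.Perm V | ∃ γ ∈ R, ∃ h : γ ≠ 0, p = reflPerm γ h},
      ∀ α ∈ Rt, g α ∈ Rt)
    (hgen : Subgroup.closure {p : Equiv.Perm V | ∃ γ ∈ Rt, ∃ h : γ ≠ 0, p = reflPerm γ h}
      = Subgroup.closure {p : Equiv.Perm V | ∃ γ ∈ R, ∃ h : γ ≠ 0, p = reflPerm γ h}) :
    (∀ α ∈ Rt, ∀ g ∈ Subgroup.closure
        {p : Equiv.Perm V | ∃ γ ∈ R, ∃ h : γ ≠ 0, p = reflPerm γ h},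
      g α ∈ Rt) ∧
    (Rt = R ∨
      ((∃ α ∈ R, (2 : ℝ) • α ∈ R) ∧
        (Rt = R \ {α ∈ R | ∀ β ∈ R, ⟪α, α⟫ ≤ ⟪β, β⟫} ∨
         Rt = R \ {α ∈ R | (2 : ℝ)⁻¹ • α ∈ R}))) := by
  classical
  constructor
  · exact fun α hα g hg => hinv g hg α hα
  by_cases hRteq : Rt = R
  · exact Or.inl hRteq
  right
  have hR0 : ∀ α ∈ R, α ≠ (0:V) := fun α hα h => hne (h ▸ hα)
  have spermW : ∀ γ ∈ R, sperm γ ∈ Subgroup.closure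
      {p : Equiv.Perm V | ∃ γ ∈ R, ∃ h : γ ≠ 0, p = reflPerm γ h} :=
    fun γ hγ => Subgroup.subset_closure ⟨γ, hγ, hR0 γ hγ, sperm_eq _⟩
  have hneR : ∀ α ∈ R, -α ∈ R := by
    intro α hα
    have h2 := hrefl α hα α hα
    rwa [reflFun_self α (hR0 α hα)] at h2
  have hRtneg : ∀ β ∈ Rt, -β ∈ Rt := by
    intro β hβ
    have h2 := hinv (sperm β) (spermW β (hsub hβ)) β hβ
    rwa [sperm_apply (hR0 β (hsub hβ)), reflFun_self β (hR0 β (hsub hβ))] at h2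
  have hRtclos : ∀ β ∈ Rt, ∀ γ ∈ Rt, reflFun β γ ∈ Rt := by
    intro β hβ γ hγ
    have h2 := hinv (sperm β) (spermW β (hsub hβ)) γ hγ
    rwa [sperm_apply (hR0 β (hsub hβ))] at h2
  -- the reflection lemma: every root is proportional to a root of Rt
  have RL : ∀ α ∈ R, ∃ β ∈ Rt, ∃ c : ℝ, c ≠ 0 ∧ α = c • β := by
    intro α hα
    by_cases hp : ∃ β ∈ Rt, ∃ c : ℝ, β = c • α
    · obtain ⟨β, hβ, c, hc⟩ := hp
      have hc0 : c ≠ 0 := by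
        rintro rfl
        rw [zero_smul] at hc
        exact hR0 β (hsub hβ) hc
      refine ⟨β, hβ, c⁻¹, inv_ne_zero hc0, ?_⟩
      rw [hc, smul_smul, inv_mul_cancel₀ hc0, one_smul]
    · exfalso
      push_neg at hp
      obtain ⟨x, hxα, hxgen⟩ := exists_generic α (hR0 α hα) Rt (hfin.subset hsub)
        (fun β hβ ⟨c, hc⟩ => hp β hβ c hc)
      have ctx : RtCtx Rt x :=
        ⟨hfin.subset hsub, fun β hβ => hR0 β (hsub hβ), hRtneg, hRtclos,
          fun a ha b hb => hcrys a (hsub ha) b (hsub hb), hxgen⟩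
      have hSfin : (Simp Rt x).Finite :=
        (hfin.subset hsub).subset (fun a ha => pos_sub (simp_sub_pos ha))
      exact key_lemma ctx hSfin.toFinset (fun a => hSfin.mem_toFinset) (hR0 α hα) hxα
        (by rw [hgen]; exact spermW α hα)
        (fun γ hγ => hinv (sperm α) (spermW α hα) γ hγ)
  have PropC : ∀ α ∈ R, ∀ β ∈ R, ∀ c : ℝ, c ≠ 0 → α = c • β →
      c = 1 ∨ c = -1 ∨ c = 2 ∨ c = -2 ∨ c = 1/2 ∨ c = -1/2 :=
    fun α hα β hβ c hc h => ratio_class (hR0 β hβ) hc h (hcrys β hβ α hα) (hcrys α hα β hβ)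
  have hno4 : ∀ γ ∈ R, (4:ℝ) • γ ∈ R → False := by
    intro γ hγ h4
    rcases PropC _ h4 γ hγ 4 (by norm_num) rfl with h | h | h | h | h | h <;> norm_num at h
  set S : Set V := {α ∈ R | (2:ℝ) • α ∈ R} with hSdef
  set DD : Set V := {α ∈ R | (2:ℝ)⁻¹ • α ∈ R} with hDdef
  have hnegS : ∀ s ∈ S, -s ∈ S := by
    intro s hs
    refine ⟨hneR s hs.1, ?_⟩
    rw [smul_neg]
    exact hneR _ hs.2
  have hhalfS : ∀ d ∈ DD, (2:ℝ)⁻¹ • d ∈ S ∧ d = (2:ℝ) • ((2:ℝ)⁻¹ • d) := by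
    intro d hd
    have h2 : (2:ℝ) • ((2:ℝ)⁻¹ • d) = d := by module
    exact ⟨⟨hd.2, by rw [h2]; exact hd.1⟩, h2.symm⟩
  -- connectivity
  have hconn : ∀ a ∈ R, ∀ b ∈ R,
      Relation.ReflTransGen (fun u v => u ∈ R ∧ v ∈ R ∧ ⟪u, v⟫ ≠ 0) a b := by
    intro a ha b hb
    by_contra hnr
    apply hirr
    refine ⟨{c | c ∈ R ∧ Relation.ReflTransGen (fun u v => u ∈ R ∧ v ∈ R ∧ ⟪u, v⟫ ≠ 0) a c},
      {c | c ∈ R ∧ ¬ Relation.ReflTransGen (fun u v => u ∈ R ∧ v ∈ R ∧ ⟪u, v⟫ ≠ 0) a c},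
      ⟨a, ha, Relation.ReflTransGen.refl⟩, ⟨b, hb, hnr⟩, ?_, ?_, ?_⟩
    · ext c
      constructor
      · rintro (h | h) <;> exact h.1
      · intro hc
        by_cases h : Relation.ReflTransGen (fun u v => u ∈ R ∧ v ∈ R ∧ ⟪u, v⟫ ≠ 0) a c
        · exact Or.inl ⟨hc, h⟩
        · exact Or.inr ⟨hc, h⟩
    · ext c
      simp only [Set.mem_inter_iff, Set.mem_setOf_eq, Set.mem_empty_iff_false, iff_false]
      tauto
    · rintro u ⟨huR, hu⟩ v ⟨hvR, hv⟩
      by_contra h0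
      exact hv (hu.tail ⟨huR, hvR, h0⟩)
  have orbit_conn : ∀ a ∈ R, ∀ b ∈ R, ∃ a', (∃ g ∈ Subgroup.closure
      {p : Equiv.Perm V | ∃ γ ∈ R, ∃ h : γ ≠ 0, p = reflPerm γ h}, g a = a') ∧
      (a' = b ∨ ⟪a', b⟫ ≠ 0) := by
    intro a ha b hb
    have hr := hconn a ha b hb
    clear hb
    induction hr with
    | refl => exact ⟨a, ⟨1, one_mem _, rfl⟩, Or.inl rfl⟩
    | @tail c d hac hcd ih =>
      obtain ⟨hcR, hdR, hcd0⟩ := hcd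
      obtain ⟨a', ⟨g, hgW, hga⟩, hcase⟩ := ih
      rcases hcase with rfl | hne
      · exact ⟨a', ⟨g, hgW, hga⟩, Or.inr hcd0⟩
      · by_cases h2 : ⟪a', d⟫ = 0
        · refine ⟨reflFun c a', ⟨sperm c * g, mul_mem (spermW c hcR) hgW, ?_⟩, Or.inr ?_⟩
          · rw [Equiv.Perm.mul_apply, hga, sperm_apply (hR0 c hcR)]
          · show ⟪a' - (2 * ⟪a', c⟫ / ⟪c, c⟫) • c, d⟫ ≠ 0
            rw [inner_sub_left, real_inner_smul_left, h2]
            have hk : 2 * ⟪a', c⟫ / ⟪c, c⟫ ≠ 0 :=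
              div_ne_zero (mul_ne_zero two_ne_zero hne) (ne_of_gt (rinner_pos (hR0 c hcR)))
            simp only [zero_sub, neg_ne_zero]
            exact mul_ne_zero hk hcd0
        · exact ⟨a', ⟨g, hgW, hga⟩, Or.inr h2⟩
  -- W-action facts
  have hgoodW := fun g hg => closure_good R hrefl g hg
  have horbR : ∀ g ∈ Subgroup.closure
      {p : Equiv.Perm V | ∃ γ ∈ R, ∃ h : γ ≠ 0, p = reflPerm γ h}, ∀ α ∈ R, g α ∈ R :=
    fun g hg => (hgoodW g hg).2.2.2.1
  have hinnerW : ∀ g ∈ Subgroup.closure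
      {p : Equiv.Perm V | ∃ γ ∈ R, ∃ h : γ ≠ 0, p = reflPerm γ h},
      ∀ u v : V, ⟪g u, g v⟫ = ⟪u, v⟫ := fun g hg => (hgoodW g hg).1
  have hsmulW : ∀ g ∈ Subgroup.closure
      {p : Equiv.Perm V | ∃ γ ∈ R, ∃ h : γ ≠ 0, p = reflPerm γ h},
      ∀ (c : ℝ) (u : V), g (c • u) = c • g u := fun g hg => (hgoodW g hg).2.2.1
  have horbS : ∀ g ∈ Subgroup.closure
      {p : Equiv.Perm V | ∃ γ ∈ R, ∃ h : γ ≠ 0, p = reflPerm γ h},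
      ∀ s ∈ S, g s ∈ S := by
    intro g hg s hs
    refine ⟨horbR g hg s hs.1, ?_⟩
    rw [← hsmulW g hg 2 s]
    exact horbR g hg _ hs.2
  have hCinv : ∀ g ∈ Subgroup.closure
      {p : Equiv.Perm V | ∃ γ ∈ R, ∃ h : γ ≠ 0, p = reflPerm γ h},
      ∀ γ ∈ R \ Rt, g γ ∈ R \ Rt := by
    intro g hg γ hγ
    refine ⟨horbR g hg γ hγ.1, ?_⟩
    intro hmem
    apply hγ.2
    have h2 := hinv g⁻¹ (inv_mem hg) _ hmem
    rwa [Equiv.Perm.inv_def, Equiv.symm_apply_apply] at h2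
  have nonorthS : ∀ a ∈ S, ∀ b ∈ S, ⟪a, b⟫ ≠ 0 → b = a ∨ b = -a := by
    intro a ha b hb hab
    by_cases hprop : ∃ c : ℝ, b = c • a
    · obtain ⟨c, hc⟩ := hprop
      have hc0 : c ≠ 0 := by
        rintro rfl
        rw [zero_smul] at hc
        exact hR0 b hb.1 hc
      rcases PropC b hb.1 a ha.1 c hc0 hc with h | h | h | h | h | h
      · left; rw [hc, h, one_smul]
      · right; rw [hc, h] <;> module
      · exfalso; apply hno4 a ha.1
        have h4 : (4:ℝ) • a = (2:ℝ) • b := by rw [hc, h] <;> module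
        rw [h4]; exact hb.2
      · exfalso; apply hno4 a ha.1
        have h4 : (4:ℝ) • a = -((2:ℝ) • b) := by rw [hc, h] <;> module
        rw [h4]; exact hneR _ hb.2
      · exfalso; apply hno4 b hb.1
        have h4 : (4:ℝ) • b = (2:ℝ) • a := by rw [hc, h] <;> module
        rw [h4]; exact ha.2
      · exfalso; apply hno4 b hb.1
        have h4 : (4:ℝ) • b = -((2:ℝ) • a) := by rw [hc, h] <;> module
        rw [h4]; exact hneR _ ha.2
    · exfalso
      have h1 : ⟪b, b⟫ = 2 * ⟪a, a⟫ := norm_double hcrys hR0 ha.1 ha.2 hb.1 hab hprop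
      have hprop' : ¬ ∃ c : ℝ, a = c • b := by
        rintro ⟨c, hc⟩
        have hc0 : c ≠ 0 := by
          rintro rfl
          rw [zero_smul] at hc
          exact hR0 a ha.1 hc
        exact hprop ⟨c⁻¹, by rw [hc, smul_smul, inv_mul_cancel₀ hc0, one_smul]⟩
      have hba : ⟪b, a⟫ ≠ 0 := by rw [real_inner_comm a b]; exact hab
      have h2 : ⟪a, a⟫ = 2 * ⟪b, b⟫ := norm_double hcrys hR0 hb.1 hb.2 ha.1 hba hprop'
      nlinarith [rinner_pos (hR0 a ha.1)]
  have horbSS : ∀ a ∈ S, ∀ b ∈ S, ∃ g ∈ Subgroup.closure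
      {p : Equiv.Perm V | ∃ γ ∈ R, ∃ h : γ ≠ 0, p = reflPerm γ h}, g a = b := by
    intro a ha b hb
    obtain ⟨a', ⟨g, hgW, hga⟩, hcase⟩ := orbit_conn a ha.1 b hb.1
    have ha' : a' ∈ S := hga ▸ horbS g hgW a ha
    rcases hcase with rfl | hne2
    · exact ⟨g, hgW, hga⟩
    · rcases nonorthS a' ha' b hb hne2 with h | h
      · exact ⟨g, hgW, hga.trans h.symm⟩
      · refine ⟨sperm a' * g, mul_mem (spermW a' ha'.1) hgW, ?_⟩
        rw [Equiv.Perm.mul_apply, hga, sperm_apply (hR0 a' ha'.1),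
          reflFun_self _ (hR0 a' ha'.1), h]
  have horbDD : ∀ d ∈ DD, ∀ d' ∈ DD, ∃ g ∈ Subgroup.closure
      {p : Equiv.Perm V | ∃ γ ∈ R, ∃ h : γ ≠ 0, p = reflPerm γ h}, g d = d' := by
    intro d hd d' hd'
    obtain ⟨h1, e1⟩ := hhalfS d hd
    obtain ⟨h1', e1'⟩ := hhalfS d' hd'
    obtain ⟨g, hgW, hg⟩ := horbSS _ h1 _ h1'
    refine ⟨g, hgW, ?_⟩
    calc g d = g ((2:ℝ) • ((2:ℝ)⁻¹ • d)) := by rw [← e1]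
      _ = (2:ℝ) • g ((2:ℝ)⁻¹ • d) := hsmulW g hgW 2 _
      _ = (2:ℝ) • ((2:ℝ)⁻¹ • d') := by rw [hg]
      _ = d' := by rw [← e1']
  -- the missing set
  have hCne : (R \ Rt).Nonempty := by
    obtain ⟨y, hy1, hy2⟩ := Set.exists_of_ssubset
      (⟨hsub, fun h => hRteq (Set.Subset.antisymm hsub h)⟩ : Rt ⊂ R)
    exact ⟨y, hy1, hy2⟩
  have hCsub : ∀ γ ∈ R \ Rt, γ ∈ S ∪ DD := by
    intro γ hγ
    obtain ⟨β, hβ, c, hc0, hceq⟩ := RL γ hγ.1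
    rcases PropC γ hγ.1 β (hsub hβ) c hc0 hceq with h | h | h | h | h | h
    · exfalso; apply hγ.2; rw [hceq, h, one_smul]; exact hβ
    · exfalso; apply hγ.2
      have he : γ = -β := by rw [hceq, h] <;> module
      rw [he]; exact hRtneg β hβ
    · right; refine ⟨hγ.1, ?_⟩
      have he : (2:ℝ)⁻¹ • γ = β := by rw [hceq, h] <;> module
      rw [he]; exact hsub hβ
    · right; refine ⟨hγ.1, ?_⟩
      have he : (2:ℝ)⁻¹ • γ = -β := by rw [hceq, h] <;> module
      rw [he]; exact hneR β (hsub hβ)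
    · left; refine ⟨hγ.1, ?_⟩
      have he : (2:ℝ) • γ = β := by rw [hceq, h] <;> module
      rw [he]; exact hsub hβ
    · left; refine ⟨hγ.1, ?_⟩
      have he : (2:ℝ) • γ = -β := by rw [hceq, h] <;> module
      rw [he]; exact hneR β (hsub hβ)
  obtain ⟨γ₀, hγ₀⟩ := hCne
  have hSne : ∃ s, s ∈ S := by
    rcases hCsub γ₀ hγ₀ with h | h
    · exact ⟨γ₀, h⟩
    · exact ⟨_, (hhalfS γ₀ h).1⟩
  obtain ⟨s₀, hs₀⟩ := hSne
  refine ⟨⟨s₀, hs₀.1, hs₀.2⟩, ?_⟩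
  have hp0 : 0 < ⟪s₀, s₀⟫ := rinner_pos (hR0 s₀ hs₀.1)
  have hnormS : ∀ s ∈ S, ⟪s, s⟫ = ⟪s₀, s₀⟫ := by
    intro s hs
    obtain ⟨g, hgW, hg⟩ := horbSS s₀ hs₀ s hs
    rw [← hg, hinnerW g hgW]
  have hnormD : ∀ d ∈ DD, ⟪d, d⟫ = 4 * ⟪s₀, s₀⟫ := by
    intro d hd
    obtain ⟨h1, e1⟩ := hhalfS d hd
    have h3 := hnormS _ h1
    calc ⟪d, d⟫ = ⟪(2:ℝ) • ((2:ℝ)⁻¹ • d), (2:ℝ) • ((2:ℝ)⁻¹ • d)⟫ := by rw [← e1]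
      _ = 4 * ⟪(2:ℝ)⁻¹ • d, (2:ℝ)⁻¹ • d⟫ := by
          rw [real_inner_smul_left, real_inner_smul_right]; ring
      _ = 4 * ⟪s₀, s₀⟫ := by rw [h3]
  have hnormM : ∀ m ∈ R, m ∉ S → m ∉ DD → ⟪m, m⟫ = 2 * ⟪s₀, s₀⟫ := by
    intro m hm hmS hmD
    obtain ⟨a', ⟨g, hgW, hga⟩, hcase⟩ := orbit_conn s₀ hs₀.1 m hm
    have ha' : a' ∈ S := hga ▸ horbS g hgW s₀ hs₀
    rcases hcase with rfl | hne2
    · exact absurd ha' hmS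
    · by_cases hprop : ∃ c : ℝ, m = c • a'
      · exfalso
        obtain ⟨c, hc⟩ := hprop
        have hc0 : c ≠ 0 := by
          rintro rfl
          rw [zero_smul] at hc
          exact hR0 m hm hc
        rcases PropC m hm a' ha'.1 c hc0 hc with h | h | h | h | h | h
        · apply hmS; rw [hc, h, one_smul]; exact ha'
        · apply hmS
          have he : m = -a' := by rw [hc, h] <;> module
          rw [he]; exact hnegS a' ha'
        · apply hmD; refine ⟨hm, ?_⟩
          have he : (2:ℝ)⁻¹ • m = a' := by rw [hc, h] <;> module
          rw [he]; exact ha'.1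
        · apply hmD; refine ⟨hm, ?_⟩
          have he : (2:ℝ)⁻¹ • m = -a' := by rw [hc, h] <;> module
          rw [he]; exact hneR a' ha'.1
        · apply hmS; refine ⟨hm, ?_⟩
          have he : (2:ℝ) • m = a' := by rw [hc, h] <;> module
          rw [he]; exact ha'.1
        · apply hmS; refine ⟨hm, ?_⟩
          have he : (2:ℝ) • m = -a' := by rw [hc, h] <;> module
          rw [he]; exact hneR a' ha'.1
      · have hxx : ⟪a', m⟫ ≠ 0 := hne2
        have h5 := norm_double hcrys hR0 ha'.1 ha'.2 hm hxx hprop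
        rw [h5, hnormS a' ha']
  have hSorb_subC : (R \ Rt ∩ S).Nonempty → S ⊆ R \ Rt := by
    rintro ⟨c₀, hc₀C, hc₀S⟩ s hs
    obtain ⟨g, hgW, hg⟩ := horbSS c₀ hc₀S s hs
    rw [← hg]
    exact hCinv g hgW c₀ hc₀C
  have hDorb_subC : (R \ Rt ∩ DD).Nonempty → DD ⊆ R \ Rt := by
    rintro ⟨c₀, hc₀C, hc₀D⟩ d hd
    obtain ⟨g, hgW, hg⟩ := horbDD c₀ hc₀D d hd
    rw [← hg]
    exact hCinv g hgW c₀ hc₀C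
  have hRtC : Rt = R \ (R \ Rt) := (Set.diff_diff_cancel_left hsub).symm
  by_cases hCS : (R \ Rt ∩ S).Nonempty <;> by_cases hCD : (R \ Rt ∩ DD).Nonempty
  · -- both classes missing: contradiction via RL
    exfalso
    have hCeq : R \ Rt = S ∪ DD :=
      Set.Subset.antisymm (fun γ hγ => hCsub γ hγ)
        (Set.union_subset (hSorb_subC hCS) (hDorb_subC hCD))
    obtain ⟨β, hβ, c, hc0, hceq⟩ := RL s₀ hs₀.1
    have hβC : β ∉ R \ Rt := fun h => h.2 hβ
    rw [hCeq] at hβC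
    apply hβC
    have hβR := hsub hβ
    rcases PropC s₀ hs₀.1 β hβR c hc0 hceq with h | h | h | h | h | h
    · rw [h, one_smul] at hceq
      left; rw [← hceq]; exact hs₀
    · left
      have he : β = -s₀ := by rw [hceq, h] <;> module
      rw [he]; exact hnegS s₀ hs₀
    · left; refine ⟨hβR, ?_⟩
      have he : (2:ℝ) • β = s₀ := by rw [hceq, h] <;> module
      rw [he]; exact hs₀.1
    · left; refine ⟨hβR, ?_⟩
      have he : (2:ℝ) • β = -s₀ := by rw [hceq, h] <;> module
      rw [he]; exact hneR s₀ hs₀.1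
    · right; refine ⟨hβR, ?_⟩
      have he : (2:ℝ)⁻¹ • β = s₀ := by rw [hceq, h] <;> module
      rw [he]; exact hs₀.1
    · right; refine ⟨hβR, ?_⟩
      have he : (2:ℝ)⁻¹ • β = -s₀ := by rw [hceq, h] <;> module
      rw [he]; exact hneR s₀ hs₀.1
  · -- only the short roots are missing
    have hCeq : R \ Rt = S := by
      apply Set.Subset.antisymm
      · intro γ hγ
        rcases hCsub γ hγ with h | h
        · exact h
        · exact absurd ⟨γ, hγ, h⟩ hCD
      · exact hSorb_subC hCS
    left
    have hShort : {α ∈ R | ∀ β ∈ R, ⟪α, α⟫ ≤ ⟪β, β⟫} = S := by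
      ext γ
      constructor
      · rintro ⟨hγR, hγmin⟩
        by_cases hγS : γ ∈ S
        · exact hγS
        exfalso
        by_cases hγD : γ ∈ DD
        · have h1 := hnormD γ hγD
          have h2 := hγmin s₀ hs₀.1
          rw [h1] at h2
          linarith
        · have h1 := hnormM γ hγR hγS hγD
          have h2 := hγmin s₀ hs₀.1
          rw [h1] at h2
          linarith
      · intro hγS
        refine ⟨hγS.1, ?_⟩
        intro β hβ
        rw [hnormS γ hγS]
        by_cases hβS : β ∈ S
        · rw [hnormS β hβS]
        by_cases hβD : β ∈ DD
        · rw [hnormD β hβD]; linarith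
        · rw [hnormM β hβ hβS hβD]; linarith
    rw [hShort, ← hCeq, ← hRtC]
  · -- only the divisible roots are missing
    have hCeq : R \ Rt = DD := by
      apply Set.Subset.antisymm
      · intro γ hγ
        rcases hCsub γ hγ with h | h
        · exact absurd ⟨γ, hγ, h⟩ hCS
        · exact h
      · exact hDorb_subC hCD
    right
    rw [← hCeq, ← hRtC]
  · exfalso
    rcases hCsub γ₀ hγ₀ with h | h
    · exact hCS ⟨γ₀, hγ₀, h⟩
    · exact hCD ⟨γ₀, hγ₀, h⟩
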